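/- Let V be a vector space over K with linear maps d, δ, □, G : V → V satisfying: d∘d = 0, δ∘δ = 0, □ = -(δ∘d + d∘δ), □ injective on V, ker G = range □, G∘d = d∘G, G∘δ = δ∘G. Then the kernel of the composite d∘G∘δ equals the (internal direct) sum ker d + ker δ. -/
import Mathlib


/-- Abstract version of Lemma 3.1(e): ker (d∘G∘δ) = ker d + ker δ. -/
theorem stmt_4 {K : Type*} [Field K] {V : Type*} [AddCommGroup V] [Module K V]
    (d δ box G : V →ₗ[K] V) (hd : d ∘ₗ d = 0) (hδ : δ ∘ₗ δ = 0)
    (hbox : box = -(δ ∘ₗ d + d ∘ₗ δ)) (hinj : Function.Injective box)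
    (hkerG : LinearMap.ker G = LinearMap.range box)
    (hGd : G ∘ₗ d = d ∘ₗ G) (hGδ : G ∘ₗ δ = δ ∘ₗ G) :
    LinearMap.ker (d ∘ₗ G ∘ₗ δ) = LinearMap.ker d ⊔ LinearMap.ker δ := by
  have hdd : ∀ v, d (d v) = 0 := fun v => by
    simpa using DFunLike.congr_fun hd v
  have hδδ : ∀ v, δ (δ v) = 0 := fun v => by
    simpa using DFunLike.congr_fun hδ v
  have hboxv : ∀ v, box v = -(δ (d v) + d (δ v)) := fun v => by
    rw [hbox]; simp
  have hGd' : ∀ v, G (d v) = d (G v) := fun v => DFunLike.congr_fun hGd v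
  have hGδ' : ∀ v, G (δ v) = δ (G v) := fun v => DFunLike.congr_fun hGδ v
  have hGbox : ∀ v, G (box v) = 0 := fun v => by
    have : box v ∈ LinearMap.ker G := by
      rw [hkerG]; exact ⟨v, rfl⟩
    exact this
  have hbinj : ∀ v, box v = 0 → v = 0 := fun v h => hinj (by simp [h])
  apply le_antisymm
  · intro x hx
    have hx' : d (G (δ x)) = 0 := by simpa using hx
    -- G (d (δ x)) = 0
    have h1 : G (d (δ x)) = 0 := by rw [hGd', hx']
    -- G (δ (d x)) = 0
    have h2 : G (δ (d x)) = 0 := by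
      have := hGbox x
      rw [hboxv x] at this
      rw [map_neg, map_add, neg_eq_zero, h1, add_zero] at this
      exact this
    -- pull back to range box
    have hz : d (δ x) ∈ LinearMap.range box := by rw [← hkerG]; exact h1
    have hw : δ (d x) ∈ LinearMap.range box := by rw [← hkerG]; exact h2
    obtain ⟨z, hzz⟩ := hz
    obtain ⟨w, hww⟩ := hw
    -- box commutes with d and δ
    have hdz : d z = 0 := by
      apply hbinj
      have : box (d z) = d (box z) := by
        rw [hboxv (d z), hboxv z]
        simp [hdd, map_add, map_neg]
      rw [this, hzz, hdd]
    have hδw : δ w = 0 := by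
      apply hbinj
      have : box (δ w) = δ (box w) := by
        rw [hboxv (δ w), hboxv w]
        simp [hδδ, map_add, map_neg]
      rw [this, hww, hδδ]
    -- box x = box (-(w+z)), so x = -(w+z)
    have hxeq : x = -z + -w := by
      apply hinj
      rw [hboxv x, map_add, map_neg, map_neg, hww, hzz]
      abel
    rw [hxeq]
    exact Submodule.add_mem_sup (neg_mem hdz) (neg_mem hδw)
  · apply sup_le
    · intro a ha
      have ha' : d a = 0 := ha
      have hdδa : d (δ a) = -box a := by
        rw [hboxv a, ha']
        simp
      show d (G (δ a)) = 0
      rw [← hGd', hdδa, map_neg, hGbox, neg_zero]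
    · intro b hb
      have hb' : δ b = 0 := hb
      show d (G (δ b)) = 0
      rw [hb', map_zero, map_zero]
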